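/- For every φ > 0, the three-state necklace translational current J(ε, φ) diverges like (1 − φ)·e^{ε/4} as ε → ∞: lim_{ε→∞} e^{−ε/4}·J(ε, φ) = 1 − φ. In particular, for large ε the current is to the right when φ < 1 and to the left when φ > 1. -/

import Mathlib

/-- The normalization `D(ε) = (1 + e^{ε/4}) + (e^{ε/2} + e^{−ε/4})` of the stationary
occupations of the three-state necklace. -/
noncomputable def neckD (ε : ℝ) : ℝ :=
  (1 + Real.exp (ε / 4)) + (Real.exp (ε / 2) + Real.exp (-ε / 4))

/-- Stationary occupation `ρ(0) = (1 + e^{ε/4})/D(ε)`. -/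
noncomputable def neckRho0 (ε : ℝ) : ℝ := (1 + Real.exp (ε / 4)) / neckD ε

/-- Stationary occupation `ρ(u) = (e^{ε/2} + e^{−ε/4})/D(ε)`. -/
noncomputable def neckRhoU (ε : ℝ) : ℝ := (Real.exp (ε / 2) + Real.exp (-ε / 4)) / neckD ε

/-- The translational current of the three-state necklace towards the right:
`J(ε,φ) = ρ(0)[e^{ε/2} + φ e^{−ε/2}] − [ρ(u) + ρ(0) φ e^{ε/2}]`. -/
noncomputable def neckJ (ε φ : ℝ) : ℝ :=
  neckRho0 ε * (Real.exp (ε / 2) + φ * Real.exp (-ε / 2))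
    - (neckRhoU ε + neckRho0 ε * φ * Real.exp (ε / 2))


noncomputable def neckG (φ s : ℝ) : ℝ :=
  ((s + 1) * (1 + φ * s ^ 4) - s * (1 + s ^ 3) - φ * (s + 1)) / (s ^ 3 + s ^ 2 + s + 1)

lemma neck_key (φ ε : ℝ) :
    Real.exp (-ε / 4) * neckJ ε φ = neckG φ (Real.exp (-ε / 4)) := by
  have ht : Real.exp (ε / 4) ≠ 0 := (Real.exp_pos _).ne'
  have hs : Real.exp (-ε / 4) = (Real.exp (ε / 4))⁻¹ := by
    rw [← Real.exp_neg]; ring_nf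
  have h2 : Real.exp (ε / 2) = Real.exp (ε / 4) ^ 2 := by
    rw [sq, ← Real.exp_add]; ring_nf
  have h3 : Real.exp (-ε / 2) = (Real.exp (ε / 4) ^ 2)⁻¹ := by
    rw [← h2, ← Real.exp_neg]; ring_nf
  have hD : neckD ε > 0 := by
    unfold neckD; positivity
  set t := Real.exp (ε / 4) with htdef
  have htpos : 0 < t := Real.exp_pos _
  have hQ : t⁻¹ ^ 3 + t⁻¹ ^ 2 + t⁻¹ + 1 > 0 := by positivity
  unfold neckJ neckRho0 neckRhoU neckG neckD
  rw [hs, h2, h3]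
  unfold neckD at hD
  rw [hs, h2] at hD
  field_simp
  ring

lemma neck_s_tendsto : Filter.Tendsto (fun ε : ℝ => Real.exp (-ε / 4)) Filter.atTop (nhds 0) := by
  have : Filter.Tendsto (fun ε : ℝ => -ε / 4) Filter.atTop Filter.atBot := by
    apply Filter.Tendsto.atBot_div_const (by norm_num)
    exact Filter.tendsto_neg_atBot_iff.mpr Filter.tendsto_id
  exact Real.tendsto_exp_atBot.comp this

lemma neck_main (φ : ℝ) :
    Filter.Tendsto (fun ε => Real.exp (-ε / 4) * neckJ ε φ) Filter.atTop (nhds (1 - φ)) := by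
  have hg : ContinuousAt (neckG φ) 0 := by
    apply ContinuousAt.div
    · fun_prop
    · fun_prop
    · norm_num
  have hg0 : neckG φ 0 = 1 - φ := by unfold neckG; norm_num
  have := hg.tendsto.comp neck_s_tendsto
  rw [hg0] at this
  simpa [Function.comp_def, neck_key φ] using this

/-- The necklace current diverges like `(1 − φ)·e^{ε/4}` as `ε → ∞`:
`e^{−ε/4}·J(ε,φ) → 1 − φ`. In particular, for large `ε` the current is to the right
when `φ < 1` and to the left when `φ > 1`. -/
theorem necklace_current_divergence (φ : ℝ) (hφ : 0 < φ) :
    Filter.Tendsto (fun ε => Real.exp (-ε / 4) * neckJ ε φ) Filter.atTop (nhds (1 - φ)) ∧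
    (φ < 1 → ∀ᶠ ε in Filter.atTop, 0 < neckJ ε φ) ∧
    (1 < φ → ∀ᶠ ε in Filter.atTop, neckJ ε φ < 0) := by
  refine ⟨neck_main φ, ?_, ?_⟩
  · intro h1
    have := (neck_main φ).eventually (eventually_gt_nhds (by linarith : (0:ℝ) < 1 - φ))
    filter_upwards [this] with ε hε
    nlinarith [Real.exp_pos (-ε / 4)]
  · intro h1
    have := (neck_main φ).eventually (eventually_lt_nhds (by linarith : 1 - φ < 0))
    filter_upwards [this] with ε hε
    nlinarith [Real.exp_pos (-ε / 4)]
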